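/- The epistemic regularity rule (JRE) — from φ ↔ ψ infer [t]_i φ ↔ [t]_i ψ — is not validity preserving in JTO_CS over interpreted-neighborhood systems: for every constant specification CS there exist formulas φ, ψ, an epistemic term t ∈ Tm^E and an agent i such that ⊨^N_CS φ ↔ ψ but not ⊨^N_CS [t]_i φ ↔ [t]_i ψ. In particular, for a justification variable x and an atomic proposition p, ⊨^N_CS p ↔ p∧p but not ⊨^N_CS [x]_i p ↔ [x]_i (p∧p). -/

import Mathlib

namespace JTO

/-- Epistemic justification terms. -/
inductive TmE (Const Var : Type) : Type
  | const : Const → TmE Const Var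
  | var   : Var → TmE Const Var
  | bang  : TmE Const Var → TmE Const Var
  | plus  : TmE Const Var → TmE Const Var → TmE Const Var
  | times : TmE Const Var → TmE Const Var → TmE Const Var

/-- Deontic (normative) justification terms. -/
inductive TmO (Const Var : Type) : Type
  | const : Const → TmO Const Var
  | var   : Var → TmO Const Var
  | ddag  : TmO Const Var → TmO Const Var
  | times : TmO Const Var → TmO Const Var → TmO Const Var

/-- Formulas of the logic JTO. -/
inductive Fm (Ag Const Var Atom : Type) : Type
  | atom  : Atom → Fm Ag Const Var Atom
  | bot   : Fm Ag Const Var Atom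
  | imp   : Fm Ag Const Var Atom → Fm Ag Const Var Atom → Fm Ag Const Var Atom
  | next  : Fm Ag Const Var Atom → Fm Ag Const Var Atom
  | wprev : Fm Ag Const Var Atom → Fm Ag Const Var Atom
  | untl  : Fm Ag Const Var Atom → Fm Ag Const Var Atom → Fm Ag Const Var Atom
  | snce  : Fm Ag Const Var Atom → Fm Ag Const Var Atom → Fm Ag Const Var Atom
  | jbox  : Ag → TmE Const Var → Fm Ag Const Var Atom → Fm Ag Const Var Atom
  | obox  : Ag → TmO Const Var → Fm Ag Const Var Atom → Fm Ag Const Var Atom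

namespace Fm

variable {Ag Const Var Atom : Type}

/-- ¬φ := φ → ⊥ -/
def neg (φ : Fm Ag Const Var Atom) : Fm Ag Const Var Atom := φ.imp bot
/-- ⊤ := ¬⊥ -/
def top : Fm Ag Const Var Atom := neg bot
/-- φ ∨ ψ := ¬φ → ψ -/
def disj (φ ψ : Fm Ag Const Var Atom) : Fm Ag Const Var Atom := (neg φ).imp ψ
/-- φ ∧ ψ := ¬(¬φ ∨ ¬ψ) -/
def conj (φ ψ : Fm Ag Const Var Atom) : Fm Ag Const Var Atom := neg (disj (neg φ) (neg ψ))
/-- φ ↔ ψ := (φ→ψ) ∧ (ψ→φ) -/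
def biim (φ ψ : Fm Ag Const Var Atom) : Fm Ag Const Var Atom := conj (φ.imp ψ) (ψ.imp φ)
/-- strong previous ⊙ₛφ := ¬⊙_w¬φ -/
def sprev (φ : Fm Ag Const Var Atom) : Fm Ag Const Var Atom := neg (wprev (neg φ))
/-- eventually ◇φ := ⊤ U φ -/
def ev (φ : Fm Ag Const Var Atom) : Fm Ag Const Var Atom := untl top φ
/-- always (henceforth) □φ := ¬◇¬φ -/
def alw (φ : Fm Ag Const Var Atom) : Fm Ag Const Var Atom := neg (ev (neg φ))
/-- once ◇⁻φ := ⊤ S φ -/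
def once (φ : Fm Ag Const Var Atom) : Fm Ag Const Var Atom := snce top φ
/-- has-always-been □⁻φ := ¬◇⁻¬φ -/
def sofar (φ : Fm Ag Const Var Atom) : Fm Ag Const Var Atom := neg (once (neg φ))
/-- ⊡φ := □⁻φ ∧ □φ -/
def boxdot (φ : Fm Ag Const Var Atom) : Fm Ag Const Var Atom := conj (sofar φ) (alw φ)
/-- weak until (unless) φ W ψ := (φ U ψ) ∨ □φ -/
def wuntl (φ ψ : Fm Ag Const Var Atom) : Fm Ag Const Var Atom := disj (untl φ ψ) (alw φ)
/-- permission P[s]ᵢφ := ¬O[s]ᵢ¬φ -/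
def pbox (i : Ag) (t : TmO Const Var) (φ : Fm Ag Const Var Atom) : Fm Ag Const Var Atom :=
  neg (obox i t (neg φ))
/-- time = m, i.e. ⊙ₛ^m ⊙_w ⊥ -/
def timeEq : ℕ → Fm Ag Const Var Atom
  | 0 => wprev bot
  | m + 1 => sprev (timeEq m)
/-- true_m(φ) := ⊡(time=m → φ) -/
def trueAt (m : ℕ) (φ : Fm Ag Const Var Atom) : Fm Ag Const Var Atom :=
  boxdot ((timeEq m).imp φ)

/-- Subformulas. -/
def subf : Fm Ag Const Var Atom → Set (Fm Ag Const Var Atom)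
  | atom p => {atom p}
  | bot => {bot}
  | imp φ ψ => insert (imp φ ψ) (subf φ ∪ subf ψ)
  | next φ => insert (next φ) (subf φ)
  | wprev φ => insert (wprev φ) (subf φ)
  | untl φ ψ => insert (untl φ ψ) (subf φ ∪ subf ψ)
  | snce φ ψ => insert (snce φ ψ) (subf φ ∪ subf ψ)
  | jbox i t φ => insert (jbox i t φ) (subf φ)
  | obox i t φ => insert (obox i t φ) (subf φ)

/-- Subf⁺(χ) := A_χ ∪ {¬ψ : ψ ∈ A_χ}, with A_χ = Subf(χ) ∪ Subf(⊤ S ⊙_w⊥). -/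
def subfPlus (χ : Fm Ag Const Var Atom) : Set (Fm Ag Const Var Atom) :=
  (subf χ ∪ subf (snce top (wprev bot))) ∪ neg '' (subf χ ∪ subf (snce top (wprev bot)))

end Fm

variable {Ag Const Var Atom : Type}

/-- Propositional tautologies in the language of JTO. -/
def Taut (φ : Fm Ag Const Var Atom) : Prop :=
  ∀ v : Fm Ag Const Var Atom → Bool,
    v Fm.bot = false → (∀ a b, v (a.imp b) = (!(v a) || v b)) → v φ = true

/-- The axioms of JTO. -/
inductive IsAxiom : Fm Ag Const Var Atom → Prop
  | taut {φ : Fm Ag Const Var Atom} : Taut φ → IsAxiom φ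
  | nextK (φ ψ : Fm Ag Const Var Atom) :
      IsAxiom ((Fm.next (φ.imp ψ)).imp ((Fm.next φ).imp (Fm.next ψ)))
  | alwK (φ ψ : Fm Ag Const Var Atom) :
      IsAxiom ((Fm.alw (φ.imp ψ)).imp ((Fm.alw φ).imp (Fm.alw ψ)))
  | fn (φ : Fm Ag Const Var Atom) :
      IsAxiom (Fm.biim (Fm.next (Fm.neg φ)) (Fm.neg (Fm.next φ)))
  | ind (φ : Fm Ag Const Var Atom) :
      IsAxiom ((Fm.alw (φ.imp (Fm.next φ))).imp (φ.imp (Fm.alw φ)))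
  | untl1 (φ ψ : Fm Ag Const Var Atom) :
      IsAxiom ((Fm.untl φ ψ).imp (Fm.ev ψ))
  | untl2 (φ ψ : Fm Ag Const Var Atom) :
      IsAxiom (Fm.biim (Fm.untl φ ψ) (Fm.disj ψ (Fm.conj φ (Fm.next (Fm.untl φ ψ)))))
  | sofarK (φ ψ : Fm Ag Const Var Atom) :
      IsAxiom ((Fm.sofar (φ.imp ψ)).imp ((Fm.sofar φ).imp (Fm.sofar ψ)))
  | wprevK (φ ψ : Fm Ag Const Var Atom) :
      IsAxiom ((Fm.wprev (φ.imp ψ)).imp ((Fm.wprev φ).imp (Fm.wprev ψ)))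
  | sw (φ : Fm Ag Const Var Atom) : IsAxiom ((Fm.sprev φ).imp (Fm.wprev φ))
  | initial : IsAxiom (Fm.once (Fm.wprev (Fm.bot : Fm Ag Const Var Atom)))
  | sofarInd (φ : Fm Ag Const Var Atom) :
      IsAxiom ((Fm.sofar (φ.imp (Fm.wprev φ))).imp (φ.imp (Fm.sofar φ)))
  | snce1 (φ ψ : Fm Ag Const Var Atom) : IsAxiom ((Fm.snce φ ψ).imp (Fm.once ψ))
  | snce2 (φ ψ : Fm Ag Const Var Atom) :
      IsAxiom (Fm.biim (Fm.snce φ ψ) (Fm.disj ψ (Fm.conj φ (Fm.sprev (Fm.snce φ ψ)))))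
  | fp (φ : Fm Ag Const Var Atom) : IsAxiom (φ.imp (Fm.next (Fm.sprev φ)))
  | pf (φ : Fm Ag Const Var Atom) : IsAxiom (φ.imp (Fm.wprev (Fm.next φ)))
  | app (i : Ag) (t s : TmE Const Var) (φ ψ : Fm Ag Const Var Atom) :
      IsAxiom ((Fm.jbox i t (φ.imp ψ)).imp ((Fm.jbox i s φ).imp (Fm.jbox i (TmE.times t s) ψ)))
  | sum1 (i : Ag) (t s : TmE Const Var) (φ : Fm Ag Const Var Atom) :
      IsAxiom ((Fm.jbox i t φ).imp (Fm.jbox i (TmE.plus t s) φ))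
  | sum2 (i : Ag) (t s : TmE Const Var) (φ : Fm Ag Const Var Atom) :
      IsAxiom ((Fm.jbox i s φ).imp (Fm.jbox i (TmE.plus t s) φ))
  | fact (i : Ag) (t : TmE Const Var) (φ : Fm Ag Const Var Atom) :
      IsAxiom ((Fm.jbox i t φ).imp φ)
  | pos (i : Ag) (t : TmE Const Var) (φ : Fm Ag Const Var Atom) :
      IsAxiom ((Fm.jbox i t φ).imp (Fm.jbox i (TmE.bang t) (Fm.jbox i t φ)))
  | appO (i : Ag) (t s : TmO Const Var) (φ ψ : Fm Ag Const Var Atom) :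
      IsAxiom ((Fm.obox i t (φ.imp ψ)).imp ((Fm.obox i s φ).imp (Fm.obox i (TmO.times t s) ψ)))
  | noc (i : Ag) (t : TmO Const Var) (φ : Fm Ag Const Var Atom) :
      IsAxiom ((Fm.obox i t φ).imp (Fm.pbox i t φ))
  | ofact (i : Ag) (t : TmO Const Var) (φ : Fm Ag Const Var Atom) :
      IsAxiom (Fm.obox i (TmO.ddag t) ((Fm.obox i t φ).imp φ))

/-- Formulas of the shape [c_{j_n}]_{i_n} … [c_{j_1}]_{i_1} φ with φ an axiom instance, n ≥ 1. -/
inductive EIter : Fm Ag Const Var Atom → Prop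
  | base {i : Ag} {c : Const} {φ : Fm Ag Const Var Atom} :
      IsAxiom φ → EIter (Fm.jbox i (TmE.const c) φ)
  | step {i : Ag} {c : Const} {φ : Fm Ag Const Var Atom} :
      EIter φ → EIter (Fm.jbox i (TmE.const c) φ)

/-- Formulas of the shape O[c_{j_n}]_{i_n} … O[c_{j_1}]_{i_1} φ with φ an axiom instance, n ≥ 1. -/
inductive OIter : Fm Ag Const Var Atom → Prop
  | base {i : Ag} {c : Const} {φ : Fm Ag Const Var Atom} :
      IsAxiom φ → OIter (Fm.obox i (TmO.const c) φ)
  | step {i : Ag} {c : Const} {φ : Fm Ag Const Var Atom} :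
      OIter φ → OIter (Fm.obox i (TmO.const c) φ)

/-- A constant specification: a downward closed set of iterated constant-justification
assertions of axiom instances. -/
structure ConstSpec (Ag Const Var Atom : Type) where
  set : Set (Fm Ag Const Var Atom)
  shape : ∀ φ ∈ set, EIter φ ∨ OIter φ
  dcE : ∀ (i : Ag) (c : Const) (φ : Fm Ag Const Var Atom),
    Fm.jbox i (TmE.const c) φ ∈ set → EIter φ → φ ∈ set
  dcO : ∀ (i : Ag) (c : Const) (φ : Fm Ag Const Var Atom),
    Fm.obox i (TmO.const c) φ ∈ set → OIter φ → φ ∈ set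

/-- CS^E : the epistemic part of a constant specification. -/
def ConstSpec.csE (CS : ConstSpec Ag Const Var Atom) : Set (Fm Ag Const Var Atom) :=
  {φ ∈ CS.set | EIter φ}

/-- CS^O : the deontic part of a constant specification. -/
def ConstSpec.csO (CS : ConstSpec Ag Const Var Atom) : Set (Fm Ag Const Var Atom) :=
  {φ ∈ CS.set | OIter φ}

/-- Derivability in the Hilbert system JTO_CS. -/
inductive Deriv (CS : ConstSpec Ag Const Var Atom) : Fm Ag Const Var Atom → Prop
  | ax {φ : Fm Ag Const Var Atom} : IsAxiom φ → Deriv CS φ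
  | mp {φ ψ : Fm Ag Const Var Atom} : Deriv CS (φ.imp ψ) → Deriv CS φ → Deriv CS ψ
  | necNext {φ : Fm Ag Const Var Atom} : Deriv CS φ → Deriv CS (Fm.next φ)
  | necWPrev {φ : Fm Ag Const Var Atom} : Deriv CS φ → Deriv CS (Fm.wprev φ)
  | necAlw {φ : Fm Ag Const Var Atom} : Deriv CS φ → Deriv CS (Fm.alw φ)
  | necSofar {φ : Fm Ag Const Var Atom} : Deriv CS φ → Deriv CS (Fm.sofar φ)
  | csax {φ : Fm Ag Const Var Atom} : φ ∈ CS.set → Deriv CS φ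

/-- Conjunction of a list of formulas. -/
def conjList : List (Fm Ag Const Var Atom) → Fm Ag Const Var Atom
  | [] => Fm.top
  | φ :: l => Fm.conj φ (conjList l)

/-- T ⊢_CS φ iff ⊢_CS (ψ₁ ∧ … ∧ ψ_n) → φ for some ψ₁, …, ψ_n ∈ T. -/
def DerivFrom (CS : ConstSpec Ag Const Var Atom) (T : Set (Fm Ag Const Var Atom))
    (φ : Fm Ag Const Var Atom) : Prop :=
  ∃ L : List (Fm Ag Const Var Atom), (∀ ψ ∈ L, ψ ∈ T) ∧ Deriv CS ((conjList L).imp φ)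

/-- A set of formulas is consistent if it does not derive ⊥. -/
def Consistent (CS : ConstSpec Ag Const Var Atom) (T : Set (Fm Ag Const Var Atom)) : Prop :=
  ¬ DerivFrom CS T Fm.bot

end JTO
namespace JTO

variable {Ag Const Var Atom : Type}

/-- The data of an F-interpreted system (Fitting-style), without conditions. -/
structure FQuasi (Ag Const Var Atom S : Type) where
  R : Set (ℕ → S)
  K : Ag → S → S → Prop
  KO : Ag → S → S → Prop
  E : Ag → S → TmE Const Var → Set (Fm Ag Const Var Atom)
  EO : Ag → S → TmO Const Var → Set (Fm Ag Const Var Atom)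
  val : S → Set Atom

/-- Truth at a point (r, n) of an F-interpreted system. -/
def FQuasi.Sat {S : Type} (I : FQuasi Ag Const Var Atom S) :
    Fm Ag Const Var Atom → (ℕ → S) → ℕ → Prop
  | .atom p, r, n => p ∈ I.val (r n)
  | .bot, _, _ => False
  | .imp φ ψ, r, n => I.Sat φ r n → I.Sat ψ r n
  | .next φ, r, n => I.Sat φ r (n + 1)
  | .wprev φ, r, n => n = 0 ∨ I.Sat φ r (n - 1)
  | .untl φ ψ, r, n => ∃ m, n ≤ m ∧ I.Sat ψ r m ∧ ∀ k, n ≤ k → k < m → I.Sat φ r k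
  | .snce φ ψ, r, n => ∃ m, m ≤ n ∧ I.Sat ψ r m ∧ ∀ k, m < k → k ≤ n → I.Sat φ r k
  | .jbox i t φ, r, n =>
      φ ∈ I.E i (r n) t ∧ ∀ r' ∈ I.R, ∀ n' : ℕ, I.K i (r n) (r' n') → I.Sat φ r' n'
  | .obox i t φ, r, n =>
      φ ∈ I.EO i (r n) t ∧ ∀ r' ∈ I.R, ∀ n' : ℕ, I.KO i (r n) (r' n') → I.Sat φ r' n'

/-- An F-interpreted system for JTO_CS. -/
structure FIS (Ag Const Var Atom S : Type) (CS : ConstSpec Ag Const Var Atom)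
    extends FQuasi Ag Const Var Atom S where
  Sne : Nonempty S
  Rne : R.Nonempty
  Krefl : ∀ (i : Ag) (w : S), K i w w
  Ktrans : ∀ (i : Ag) (u v w : S), K i u v → K i v w → K i u w
  KOshift : ∀ (i : Ag) (w v : S), KO i w v → KO i v v
  Emono : ∀ (i : Ag) (v w : S) (t : TmE Const Var), K i v w → E i v t ⊆ E i w t
  Ecs : ∀ (i : Ag) (w : S) (t : TmE Const Var) (φ : Fm Ag Const Var Atom),
    Fm.jbox i t φ ∈ CS.csE → φ ∈ E i w t
  Eapp : ∀ (i : Ag) (w : S) (t s : TmE Const Var) (φ ψ : Fm Ag Const Var Atom),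
    φ.imp ψ ∈ E i w t → φ ∈ E i w s → ψ ∈ E i w (TmE.times t s)
  Epos : ∀ (i : Ag) (w : S) (t : TmE Const Var) (φ : Fm Ag Const Var Atom),
    φ ∈ E i w t → Fm.jbox i t φ ∈ E i w (TmE.bang t)
  EOcs : ∀ (i : Ag) (w : S) (t : TmO Const Var) (φ : Fm Ag Const Var Atom),
    Fm.obox i t φ ∈ CS.csO → φ ∈ EO i w t
  EOapp : ∀ (i : Ag) (w : S) (t s : TmO Const Var) (φ ψ : Fm Ag Const Var Atom),
    φ.imp ψ ∈ EO i w t → φ ∈ EO i w s → ψ ∈ EO i w (TmO.times t s)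
  EOcons : ∀ (i : Ag) (w : S) (t : TmO Const Var) (φ : Fm Ag Const Var Atom),
    φ ∈ EO i w t → Fm.neg φ ∉ EO i w t
  EOfact : ∀ (i : Ag) (w : S) (t : TmO Const Var) (φ : Fm Ag Const Var Atom),
    (Fm.obox i t φ).imp φ ∈ EO i w (TmO.ddag t)

/-- Truth at a point of an F-interpreted system. -/
abbrev FIS.Sat {S : Type} {CS : ConstSpec Ag Const Var Atom}
    (I : FIS Ag Const Var Atom S CS) :
    Fm Ag Const Var Atom → (ℕ → S) → ℕ → Prop :=
  I.toFQuasi.Sat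

/-- I ⊨ φ : truth at every point of the system. -/
def FIS.Valid {S : Type} {CS : ConstSpec Ag Const Var Atom}
    (I : FIS Ag Const Var Atom S CS) (φ : Fm Ag Const Var Atom) : Prop :=
  ∀ r ∈ I.R, ∀ n : ℕ, I.Sat φ r n

/-- ⊨_CS φ : validity in all F-interpreted systems for JTO_CS. -/
def FValid (CS : ConstSpec Ag Const Var Atom) (φ : Fm Ag Const Var Atom) : Prop :=
  ∀ (S : Type) (I : FIS Ag Const Var Atom S CS), I.Valid φ

/-- T ⊨_CS φ : the local consequence relation over F-interpreted systems. -/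
def FConseq (CS : ConstSpec Ag Const Var Atom) (T : Set (Fm Ag Const Var Atom))
    (φ : Fm Ag Const Var Atom) : Prop :=
  ∀ (S : Type) (I : FIS Ag Const Var Atom S CS), ∀ r ∈ I.R, ∀ n : ℕ,
    (∀ ψ ∈ T, I.Sat ψ r n) → I.Sat φ r n

/-- Maximal consistent sets of formulas. -/
def MCS (CS : ConstSpec Ag Const Var Atom) : Set (Set (Fm Ag Const Var Atom)) :=
  {Γ | Consistent CS Γ ∧ ∀ Δ, Γ ⊂ Δ → ¬ Consistent CS Δ}

/-- χ-maximal consistent subsets of Subf⁺(χ). -/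
def MCSx (CS : ConstSpec Ag Const Var Atom) (χ : Fm Ag Const Var Atom) :
    Set (Set (Fm Ag Const Var Atom)) :=
  {X | X ⊆ Fm.subfPlus χ ∧ Consistent CS X ∧
    ∀ Y, Y ⊆ Fm.subfPlus χ → X ⊂ Y → ¬ Consistent CS Y}

/-- The relation R_○ on MCS_χ (given by witnessing maximal consistent sets). -/
def Rnext (CS : ConstSpec Ag Const Var Atom) (χ : Fm Ag Const Var Atom)
    (X Y : Set (Fm Ag Const Var Atom)) : Prop :=
  ∃ Γ ∈ MCS CS, ∃ Δ ∈ MCS CS, X = Γ ∩ Fm.subfPlus χ ∧ Y = Δ ∩ Fm.subfPlus χ ∧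
    {φ | Fm.next φ ∈ Γ} ⊆ Δ

/-- Acceptable sequences of elements of MCS_χ. -/
def Acceptable (CS : ConstSpec Ag Const Var Atom) (χ : Fm Ag Const Var Atom)
    (X : ℕ → Set (Fm Ag Const Var Atom)) : Prop :=
  (∀ n, X n ∈ MCSx CS χ) ∧
  (∀ n, Rnext CS χ (X n) (X (n + 1))) ∧
  (∀ n (φ ψ : Fm Ag Const Var Atom), Fm.untl φ ψ ∈ X n →
    ∃ m, n ≤ m ∧ ψ ∈ X m ∧ ∀ k, n ≤ k → k < m → φ ∈ X k) ∧
  Fm.wprev Fm.bot ∈ X 0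

/-- The canonical epistemic accessibility relation. -/
def canK (CS : ConstSpec Ag Const Var Atom) (χ : Fm Ag Const Var Atom) (i : Ag)
    (X Y : Set (Fm Ag Const Var Atom)) : Prop :=
  ∀ Δ ∈ MCS CS, Y = Δ ∩ Fm.subfPlus χ →
    ∃ Γ ∈ MCS CS, X = Γ ∩ Fm.subfPlus χ ∧
      {φ | ∃ t : TmE Const Var, Fm.jbox i t φ ∈ Γ} ⊆ Δ

/-- The canonical evidence function. -/
def canE (CS : ConstSpec Ag Const Var Atom) (χ : Fm Ag Const Var Atom) (i : Ag)
    (X : Set (Fm Ag Const Var Atom)) (t : TmE Const Var) : Set (Fm Ag Const Var Atom) :=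
  {φ | ∀ Γ ∈ MCS CS, X = Γ ∩ Fm.subfPlus χ → Fm.jbox i t φ ∈ Γ}

/-- The canonical deontic accessibility relation. -/
def canKO (CS : ConstSpec Ag Const Var Atom) (χ : Fm Ag Const Var Atom) (i : Ag)
    (X Y : Set (Fm Ag Const Var Atom)) : Prop :=
  ∃ Γ ∈ MCS CS, ∃ Δ ∈ MCS CS, X = Γ ∩ Fm.subfPlus χ ∧ Y = Δ ∩ Fm.subfPlus χ ∧
    {φ | ∃ t : TmO Const Var, Fm.obox i t φ ∈ Γ} ⊆ Δ

/-- The canonical normative evidence function. -/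
def canEO (CS : ConstSpec Ag Const Var Atom) (χ : Fm Ag Const Var Atom) (i : Ag)
    (X : Set (Fm Ag Const Var Atom)) (t : TmO Const Var) : Set (Fm Ag Const Var Atom) :=
  {φ | ∀ Γ ∈ MCS CS, X = Γ ∩ Fm.subfPlus χ → Fm.obox i t φ ∈ Γ}

/-- The χ-canonical F-interpreted system (as structured data). -/
def canFQuasi (CS : ConstSpec Ag Const Var Atom) (χ : Fm Ag Const Var Atom) :
    FQuasi Ag Const Var Atom ↥(MCSx CS χ) where
  R := {r | Acceptable CS χ (fun n => ((r n : Set (Fm Ag Const Var Atom))))}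
  K := fun i X Y => canK CS χ i X.1 Y.1
  KO := fun i X Y => canKO CS χ i X.1 Y.1
  E := fun i X t => canE CS χ i X.1 t
  EO := fun i X t => canEO CS χ i X.1 t
  val := fun X => {p | Fm.atom p ∈ X.1}

end JTO
namespace JTO

variable {Ag Const Var Atom : Type}

/-- The data of a quasi-interpreted-neighborhood system. -/
structure NQuasi (Ag Const Var Atom S : Type) where
  R : Set (ℕ → S)
  N : Ag → S → TmE Const Var → Set (Set S)
  NO : Ag → S → TmO Const Var → Set (Set S)
  val : S → Set Atom
  valF : S → Set (Fm Ag Const Var Atom)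

/-- The image Im(R) of the system of runs. -/
def NQuasi.Im {S : Type} (I : NQuasi Ag Const Var Atom S) : Set S :=
  {w | ∃ r ∈ I.R, ∃ n : ℕ, r n = w}

/-- Truth at a point (r, n) of a quasi-interpreted-neighborhood system. -/
def NQuasi.SatP {S : Type} (I : NQuasi Ag Const Var Atom S) :
    Fm Ag Const Var Atom → (ℕ → S) → ℕ → Prop
  | .atom p, r, n => p ∈ I.val (r n)
  | .bot, _, _ => False
  | .imp φ ψ, r, n => I.SatP φ r n → I.SatP ψ r n
  | .next φ, r, n => I.SatP φ r (n + 1)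
  | .wprev φ, r, n => n = 0 ∨ I.SatP φ r (n - 1)
  | .untl φ ψ, r, n => ∃ m, n ≤ m ∧ I.SatP ψ r m ∧ ∀ k, n ≤ k → k < m → I.SatP φ r k
  | .snce φ ψ, r, n => ∃ m, m ≤ n ∧ I.SatP ψ r m ∧ ∀ k, m < k → k ≤ n → I.SatP φ r k
  | .jbox i t φ, r, n =>
      {w | (∃ r' ∈ I.R, ∃ n' : ℕ, r' n' = w ∧ I.SatP φ r' n') ∨
            (w ∉ I.Im ∧ φ ∈ I.valF w)} ∈ I.N i (r n) t
  | .obox i t φ, r, n =>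
      {w | (∃ r' ∈ I.R, ∃ n' : ℕ, r' n' = w ∧ I.SatP φ r' n') ∨
            (w ∉ I.Im ∧ φ ∈ I.valF w)} ∈ I.NO i (r n) t

/-- Truth at a state of a quasi-interpreted-neighborhood system. -/
def NQuasi.SatS {S : Type} (I : NQuasi Ag Const Var Atom S)
    (φ : Fm Ag Const Var Atom) (w : S) : Prop :=
  (∃ r ∈ I.R, ∃ n : ℕ, r n = w ∧ I.SatP φ r n) ∨ (w ∉ I.Im ∧ φ ∈ I.valF w)

/-- The truth set ⟦φ⟧ of a formula. -/
def NQuasi.tset {S : Type} (I : NQuasi Ag Const Var Atom S)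
    (φ : Fm Ag Const Var Atom) : Set S :=
  {w | I.SatS φ w}

/-- An interpreted-neighborhood system for JTO_CS. -/
structure NIS (Ag Const Var Atom S : Type) (CS : ConstSpec Ag Const Var Atom)
    extends NQuasi Ag Const Var Atom S where
  Sne : Nonempty S
  Rne : R.Nonempty
  Ncs : ∀ (i : Ag) (t : TmE Const Var) (φ : Fm Ag Const Var Atom),
    Fm.jbox i t φ ∈ CS.csE → ∀ w ∈ toNQuasi.Im, toNQuasi.tset φ ∈ N i w t
  Napp : ∀ (i : Ag), ∀ w ∈ toNQuasi.Im, ∀ (t s : TmE Const Var) (φ ψ : Fm Ag Const Var Atom),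
    toNQuasi.tset (φ.imp ψ) ∈ N i w t → toNQuasi.tset φ ∈ N i w s →
      toNQuasi.tset ψ ∈ N i w (TmE.times t s)
  Nsum : ∀ (i : Ag), ∀ w ∈ toNQuasi.Im, ∀ (t s : TmE Const Var) (φ : Fm Ag Const Var Atom),
    toNQuasi.tset φ ∈ N i w s →
      toNQuasi.tset φ ∈ N i w (TmE.plus t s) ∧ toNQuasi.tset φ ∈ N i w (TmE.plus s t)
  Nrefl : ∀ (i : Ag), ∀ w ∈ toNQuasi.Im, ∀ (t : TmE Const Var) (φ : Fm Ag Const Var Atom),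
    toNQuasi.tset φ ∈ N i w t → w ∈ toNQuasi.tset φ
  Npos : ∀ (i : Ag), ∀ w ∈ toNQuasi.Im, ∀ (t : TmE Const Var) (φ : Fm Ag Const Var Atom),
    toNQuasi.tset φ ∈ N i w t → toNQuasi.tset (Fm.jbox i t φ) ∈ N i w (TmE.bang t)
  NOcs : ∀ (i : Ag) (t : TmO Const Var) (φ : Fm Ag Const Var Atom),
    Fm.obox i t φ ∈ CS.csO → ∀ w ∈ toNQuasi.Im, toNQuasi.tset φ ∈ NO i w t
  NOapp : ∀ (i : Ag), ∀ w ∈ toNQuasi.Im, ∀ (t s : TmO Const Var) (φ ψ : Fm Ag Const Var Atom),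
    toNQuasi.tset (φ.imp ψ) ∈ NO i w t → toNQuasi.tset φ ∈ NO i w s →
      toNQuasi.tset ψ ∈ NO i w (TmO.times t s)
  NOnoc : ∀ (i : Ag), ∀ w ∈ toNQuasi.Im, ∀ (t : TmO Const Var) (φ : Fm Ag Const Var Atom),
    toNQuasi.tset φ ∈ NO i w t → toNQuasi.tset (Fm.neg φ) ∉ NO i w t
  NOfact : ∀ (i : Ag), ∀ w ∈ toNQuasi.Im, ∀ (t : TmO Const Var) (φ : Fm Ag Const Var Atom),
    toNQuasi.tset ((Fm.obox i t φ).imp φ) ∈ NO i w (TmO.ddag t)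

/-- Truth at a point of an interpreted-neighborhood system. -/
abbrev NIS.SatP {S : Type} {CS : ConstSpec Ag Const Var Atom}
    (I : NIS Ag Const Var Atom S CS) :
    Fm Ag Const Var Atom → (ℕ → S) → ℕ → Prop :=
  I.toNQuasi.SatP

/-- I ⊨ φ for an interpreted-neighborhood system. -/
def NIS.Valid {S : Type} {CS : ConstSpec Ag Const Var Atom}
    (I : NIS Ag Const Var Atom S CS) (φ : Fm Ag Const Var Atom) : Prop :=
  ∀ r ∈ I.R, ∀ n : ℕ, I.SatP φ r n

/-- ⊨^N_CS φ : validity in all interpreted-neighborhood systems for JTO_CS. -/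
def NValid (CS : ConstSpec Ag Const Var Atom) (φ : Fm Ag Const Var Atom) : Prop :=
  ∀ (S : Type) (I : NIS Ag Const Var Atom S CS), I.Valid φ

/-- T ⊨^N_CS φ : local consequence over interpreted-neighborhood systems. -/
def NConseq (CS : ConstSpec Ag Const Var Atom) (T : Set (Fm Ag Const Var Atom))
    (φ : Fm Ag Const Var Atom) : Prop :=
  ∀ (S : Type) (I : NIS Ag Const Var Atom S CS), ∀ r ∈ I.R, ∀ n : ℕ,
    (∀ ψ ∈ T, I.SatP ψ r n) → I.SatP φ r n

end JTO

/-!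
In the countermodel below the only run is `some : ℕ → Option ℕ`, and the off-run state `none`
satisfies exactly the formula `p` (off the runs, truth is read off `valF`). So `⟦p⟧` is the whole
state space while `⟦p ∧ p⟧` misses `none`: equivalent formulas can have different truth sets.
A justification variable gets the single neighbourhood `univ`, so `[x]ᵢp` holds and `[x]ᵢ(p ∧ p)`
fails. Every other neighbourhood family is the set of supersets of the run, so there `[t]ᵢφ` and
`O[t]ᵢφ` just say that `φ` holds along the run. As this does not depend on the state, each
condition on an interpreted-neighbourhood system is an instance of an axiom holding on the run.
-/

namespace JTO

variable {Ag Const Var Atom : Type}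

namespace NQuasi

variable {S : Type} (I : NQuasi Ag Const Var Atom S) (r : ℕ → S) (n : ℕ)

@[simp]
theorem satP_bot : ¬ I.SatP Fm.bot r n := id

@[simp]
theorem satP_imp (φ ψ : Fm Ag Const Var Atom) :
    I.SatP (φ.imp ψ) r n ↔ (I.SatP φ r n → I.SatP ψ r n) := Iff.rfl

@[simp]
theorem satP_neg (φ : Fm Ag Const Var Atom) : I.SatP φ.neg r n ↔ ¬ I.SatP φ r n := Iff.rfl

@[simp]
theorem satP_top : I.SatP Fm.top r n := id

@[simp]
theorem satP_conj (φ ψ : Fm Ag Const Var Atom) :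
    I.SatP (φ.conj ψ) r n ↔ I.SatP φ r n ∧ I.SatP ψ r n := by
  simp only [Fm.conj, Fm.disj, satP_neg, satP_imp]
  tauto

@[simp]
theorem satP_disj (φ ψ : Fm Ag Const Var Atom) :
    I.SatP (φ.disj ψ) r n ↔ I.SatP φ r n ∨ I.SatP ψ r n := by
  simp only [Fm.disj, satP_neg, satP_imp]
  tauto

@[simp]
theorem satP_biim (φ ψ : Fm Ag Const Var Atom) :
    I.SatP (φ.biim ψ) r n ↔ (I.SatP φ r n ↔ I.SatP ψ r n) := by
  simp only [Fm.biim, satP_conj, satP_imp]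
  tauto

@[simp]
theorem satP_next (φ : Fm Ag Const Var Atom) : I.SatP φ.next r n ↔ I.SatP φ r (n + 1) :=
  Iff.rfl

@[simp]
theorem satP_wprev (φ : Fm Ag Const Var Atom) :
    I.SatP φ.wprev r n ↔ n = 0 ∨ I.SatP φ r (n - 1) := Iff.rfl

@[simp]
theorem satP_sprev (φ : Fm Ag Const Var Atom) :
    I.SatP φ.sprev r n ↔ n ≠ 0 ∧ I.SatP φ r (n - 1) := by
  simp only [Fm.sprev, satP_neg, satP_wprev]
  tauto

@[simp]
theorem satP_untl (φ ψ : Fm Ag Const Var Atom) :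
    I.SatP (φ.untl ψ) r n ↔ ∃ m, n ≤ m ∧ I.SatP ψ r m ∧ ∀ k, n ≤ k → k < m → I.SatP φ r k :=
  Iff.rfl

@[simp]
theorem satP_snce (φ ψ : Fm Ag Const Var Atom) :
    I.SatP (φ.snce ψ) r n ↔ ∃ m, m ≤ n ∧ I.SatP ψ r m ∧ ∀ k, m < k → k ≤ n → I.SatP φ r k :=
  Iff.rfl

@[simp]
theorem satP_ev (φ : Fm Ag Const Var Atom) : I.SatP φ.ev r n ↔ ∃ m, n ≤ m ∧ I.SatP φ r m := by
  simp [Fm.ev]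

@[simp]
theorem satP_alw (φ : Fm Ag Const Var Atom) : I.SatP φ.alw r n ↔ ∀ m, n ≤ m → I.SatP φ r m := by
  simp [Fm.alw]

@[simp]
theorem satP_once (φ : Fm Ag Const Var Atom) : I.SatP φ.once r n ↔ ∃ m, m ≤ n ∧ I.SatP φ r m := by
  simp [Fm.once]

@[simp]
theorem satP_sofar (φ : Fm Ag Const Var Atom) :
    I.SatP φ.sofar r n ↔ ∀ m, m ≤ n → I.SatP φ r m := by
  simp [Fm.sofar]

theorem satP_of_taut {φ : Fm Ag Const Var Atom} (h : Taut φ) : I.SatP φ r n := by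
  classical
  simpa using h (fun ψ => decide (I.SatP ψ r n)) (by simp) fun a b => by
    by_cases I.SatP a r n <;> simp [*]

variable {I r n}

theorem satP_alw_of_induction {φ : Fm Ag Const Var Atom}
    (hstep : ∀ m, n ≤ m → I.SatP φ r m → I.SatP φ r (m + 1)) (hφ : I.SatP φ r n) :
    ∀ m, n ≤ m → I.SatP φ r m := by
  intro m hm
  induction m, hm using Nat.le_induction with
  | base => exact hφ
  | succ m hm ih => exact hstep m hm ih

theorem satP_sofar_of_induction {φ : Fm Ag Const Var Atom}
    (hstep : ∀ m, m ≤ n → I.SatP φ r m → m = 0 ∨ I.SatP φ r (m - 1)) (hφ : I.SatP φ r n) :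
    ∀ m, m ≤ n → I.SatP φ r m := by
  intro m hm
  induction hm using Nat.decreasingInduction with
  | self => exact hφ
  | of_succ k hk ih =>
    simpa using (hstep (k + 1) hk ih).resolve_left k.succ_ne_zero

theorem satP_untl_iff_unfold (φ ψ : Fm Ag Const Var Atom) :
    I.SatP (φ.untl ψ) r n ↔ I.SatP ψ r n ∨ I.SatP φ r n ∧ I.SatP (φ.untl ψ) r (n + 1) := by
  simp only [satP_untl]
  constructor
  · rintro ⟨m, hnm, hψ, hφ⟩
    rcases hnm.eq_or_lt with rfl | hlt
    · exact .inl hψ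
    · exact .inr ⟨hφ n le_rfl hlt, m, hlt, hψ, fun k hk => hφ k (by omega)⟩
  · rintro (hψ | ⟨hφ, m, hnm, hψ, hφ'⟩)
    · exact ⟨n, le_rfl, hψ, fun k hk hk' => absurd hk' (by omega)⟩
    · refine ⟨m, by omega, hψ, fun k hk hk' => ?_⟩
      rcases hk.eq_or_lt with rfl | hlt
      exacts [hφ, hφ' k hlt hk']

theorem satP_snce_iff_unfold (φ ψ : Fm Ag Const Var Atom) :
    I.SatP (φ.snce ψ) r n ↔
      I.SatP ψ r n ∨ I.SatP φ r n ∧ n ≠ 0 ∧ I.SatP (φ.snce ψ) r (n - 1) := by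
  simp only [satP_snce]
  constructor
  · rintro ⟨m, hmn, hψ, hφ⟩
    rcases hmn.eq_or_lt with rfl | hlt
    · exact .inl hψ
    · exact .inr ⟨hφ n hlt le_rfl, by omega, m, by omega, hψ, fun k hk hk' => hφ k hk (by omega)⟩
  · rintro (hψ | ⟨hφ, hn, m, hmn, hψ, hφ'⟩)
    · exact ⟨n, le_rfl, hψ, fun k hk hk' => absurd hk' (by omega)⟩
    · refine ⟨m, by omega, hψ, fun k hk hk' => ?_⟩
      rcases hk'.eq_or_lt with rfl | hlt
      exacts [hφ, hφ' k hk (by omega)]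

end NQuasi

namespace RegularityCountermodel

def nbhd : TmE Const Var → Set (Set (Option ℕ))
  | .var _ => {Set.univ}
  | _ => {A | Set.range some ⊆ A}

def model (p : Atom) : NQuasi Ag Const Var Atom (Option ℕ) where
  R := {some}
  N := fun _ _ => nbhd
  NO := fun _ _ _ => {A | Set.range some ⊆ A}
  val := fun _ => Set.univ
  valF := fun _ => {Fm.atom p}

variable (p : Atom)

theorem im_model : (model (Ag := Ag) (Const := Const) (Var := Var) p).Im = Set.range some := by
  ext w
  constructor
  · rintro ⟨r, rfl, n, rfl⟩
    exact ⟨n, rfl⟩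
  · rintro ⟨n, rfl⟩
    exact ⟨some, rfl, n, rfl⟩

theorem satS_some_iff (φ : Fm Ag Const Var Atom) (n : ℕ) :
    (model p).SatS φ (some n) ↔ (model p).SatP φ some n := by
  constructor
  · rintro (⟨r, rfl, m, hm, h⟩ | ⟨hn, -⟩)
    · rwa [Option.some_inj.1 hm] at h
    · exact absurd (im_model p ▸ ⟨n, rfl⟩) hn
  · exact fun h => .inl ⟨some, rfl, n, rfl, h⟩

theorem satS_none_iff (φ : Fm Ag Const Var Atom) : (model p).SatS φ none ↔ φ = Fm.atom p := by
  have hnone : none ∉ (model (Ag := Ag) (Const := Const) (Var := Var) p).Im := by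
    simp [im_model]
  constructor
  · rintro (⟨r, rfl, m, hm, -⟩ | ⟨-, h⟩)
    exacts [absurd hm (Option.some_ne_none m), h]
  · rintro rfl
    exact .inr ⟨hnone, rfl⟩

theorem range_some_subset_tset_iff (φ : Fm Ag Const Var Atom) :
    Set.range some ⊆ (model p).tset φ ↔ ∀ n, (model p).SatP φ some n :=
  Set.range_subset_iff.trans (forall_congr' (satS_some_iff p φ))

theorem forall_satP_of_satP_jbox {i : Ag} {t : TmE Const Var} {φ : Fm Ag Const Var Atom}
    {r : ℕ → Option ℕ} {n : ℕ} (h : (model p).SatP (Fm.jbox i t φ) r n) :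
    ∀ m, (model p).SatP φ some m := by
  refine (range_some_subset_tset_iff p φ).1 ?_
  cases t with
  | var y =>
    have h : (model p).tset φ = Set.univ := h
    exact h ▸ Set.subset_univ _
  | _ => exact h

theorem satP_jbox_iff_of_ne_var {t : TmE Const Var} (ht : ∀ y, t ≠ .var y) (i : Ag)
    (φ : Fm Ag Const Var Atom) (r : ℕ → Option ℕ) (n : ℕ) :
    (model p).SatP (Fm.jbox i t φ) r n ↔ ∀ m, (model p).SatP φ some m := by
  cases t with
  | var y => exact absurd rfl (ht y)
  | _ => exact range_some_subset_tset_iff p φ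

theorem satP_obox_iff (i : Ag) (t : TmO Const Var) (φ : Fm Ag Const Var Atom)
    (r : ℕ → Option ℕ) (n : ℕ) :
    (model p).SatP (Fm.obox i t φ) r n ↔ ∀ m, (model p).SatP φ some m :=
  range_some_subset_tset_iff p φ

theorem satP_of_isAxiom {φ : Fm Ag Const Var Atom} (h : IsAxiom φ) (n : ℕ) :
    (model p).SatP φ some n := by
  cases h with
  | taut h => exact NQuasi.satP_of_taut _ _ _ h
  | nextK φ ψ => exact id
  | alwK φ ψ => simpa using fun h hφ m hm => h m hm (hφ m hm)
  | fn φ => simp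
  | ind φ => simpa using NQuasi.satP_alw_of_induction
  | untl1 φ ψ => simpa using fun m hm hψ _ => ⟨m, hm, hψ⟩
  | untl2 φ ψ => simpa [-NQuasi.satP_untl] using NQuasi.satP_untl_iff_unfold φ ψ
  | sofarK φ ψ => simpa using fun h hφ m hm => h m hm (hφ m hm)
  | wprevK φ ψ => simp only [NQuasi.satP_imp, NQuasi.satP_wprev]; tauto
  | sw φ => simp only [NQuasi.satP_imp, NQuasi.satP_sprev, NQuasi.satP_wprev]; tauto
  | initial => simp
  | sofarInd φ => simpa using NQuasi.satP_sofar_of_induction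
  | snce1 φ ψ => simpa using fun m hm hψ _ => ⟨m, hm, hψ⟩
  | snce2 φ ψ => simpa [-NQuasi.satP_snce] using NQuasi.satP_snce_iff_unfold φ ψ
  | fp φ => simp
  | pf φ => rcases n with _ | n <;> simp
  | app i t s φ ψ =>
    intro h₁ h₂
    exact (satP_jbox_iff_of_ne_var p (by simp) ..).2 fun m =>
      forall_satP_of_satP_jbox p h₁ m (forall_satP_of_satP_jbox p h₂ m)
  | sum1 | sum2 =>
    exact fun h => (satP_jbox_iff_of_ne_var p (by simp) ..).2 (forall_satP_of_satP_jbox p h)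
  | fact i t φ => exact fun h => forall_satP_of_satP_jbox p h n
  | pos i t φ => exact fun h => (satP_jbox_iff_of_ne_var p (by simp) ..).2 fun _ => h
  | appO i t s φ ψ =>
    simp only [NQuasi.satP_imp, satP_obox_iff]
    exact fun h₁ h₂ m => h₁ m (h₂ m)
  | noc i t φ =>
    simp only [Fm.pbox, NQuasi.satP_imp, NQuasi.satP_neg, satP_obox_iff]
    exact fun h₁ h₂ => h₂ 0 (h₁ 0)
  | ofact i t φ =>
    simp only [satP_obox_iff, NQuasi.satP_imp]
    exact fun m h => h m

theorem satP_of_eIter {φ : Fm Ag Const Var Atom} (h : EIter φ) (n : ℕ) :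
    (model p).SatP φ some n := by
  induction h generalizing n with
  | base h => exact (satP_jbox_iff_of_ne_var p (by simp) ..).2 (satP_of_isAxiom p h)
  | step _ ih => exact (satP_jbox_iff_of_ne_var p (by simp) ..).2 ih

theorem satP_of_oIter {φ : Fm Ag Const Var Atom} (h : OIter φ) (n : ℕ) :
    (model p).SatP φ some n := by
  induction h generalizing n with
  | base h => exact (satP_obox_iff p ..).2 (satP_of_isAxiom p h)
  | step _ ih => exact (satP_obox_iff p ..).2 ih

def nis (CS : ConstSpec Ag Const Var Atom) : NIS Ag Const Var Atom (Option ℕ) CS where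
  toNQuasi := model p
  Sne := ⟨none⟩
  Rne := ⟨some, rfl⟩
  Ncs _ _ _ h _ _ := satP_of_eIter p h.2 0
  Napp i _ _ t s φ ψ := satP_of_isAxiom p (.app i t s φ ψ) 0
  Nsum i _ _ t s φ h :=
    ⟨satP_of_isAxiom p (.sum2 i t s φ) 0 h, satP_of_isAxiom p (.sum1 i s t φ) 0 h⟩
  Nrefl i w hw t φ h := by
    obtain ⟨n, rfl⟩ := im_model p ▸ hw
    exact (satS_some_iff p φ n).2 (satP_of_isAxiom p (.fact i t φ) n h)
  Npos i _ _ t φ := satP_of_isAxiom p (.pos i t φ) 0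
  NOcs _ _ _ h _ _ := satP_of_oIter p h.2 0
  NOapp i _ _ t s φ ψ := satP_of_isAxiom p (.appO i t s φ ψ) 0
  NOnoc i _ _ t φ := satP_of_isAxiom p (.noc i t φ) 0
  NOfact i _ _ t φ := satP_of_isAxiom p (.ofact i t φ) 0

theorem tset_atom : (model p).tset (Fm.atom p : Fm Ag Const Var Atom) = Set.univ :=
  Set.eq_univ_of_forall fun
    | none => (satS_none_iff p _).2 rfl
    | some n => (satS_some_iff p _ n).2 trivial

theorem none_notMem_tset_conj :
    none ∉ (model p).tset ((Fm.atom p).conj (Fm.atom p) : Fm Ag Const Var Atom) :=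
  fun h => nomatch (satS_none_iff p _).1 h

end RegularityCountermodel

theorem nValid_biim_conj_self (CS : ConstSpec Ag Const Var Atom) (φ : Fm Ag Const Var Atom) :
    NValid CS (φ.biim (φ.conj φ)) := fun _ _ _ _ _ => by simp

open RegularityCountermodel in
theorem not_nValid_biim_jbox_var_atom_conj (CS : ConstSpec Ag Const Var Atom) (i : Ag) (x : Var)
    (p : Atom) :
    ¬ NValid CS (Fm.biim (Fm.jbox i (TmE.var x) (Fm.atom p))
      (Fm.jbox i (TmE.var x) (Fm.conj (Fm.atom p) (Fm.atom p)))) := by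
  intro h
  have hiff := (NQuasi.satP_biim ..).1 (h _ (nis p CS) some rfl 0)
  have hconj : (model p).tset ((Fm.atom p).conj (Fm.atom p) : Fm Ag Const Var Atom) = Set.univ :=
    hiff.1 (tset_atom p)
  exact none_notMem_tset_conj p (hconj ▸ Set.mem_univ none)

theorem jre_not_validity_preserving_general (Ag Const Var Atom : Type)
    (CS : ConstSpec Ag Const Var Atom) (i : Ag) (x : Var) (p : Atom) :
    (∃ (φ ψ : Fm Ag Const Var Atom) (t : TmE Const Var) (j : Ag),
      NValid CS (Fm.biim φ ψ) ∧
      ¬ NValid CS (Fm.biim (Fm.jbox j t φ) (Fm.jbox j t ψ))) ∧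
    (NValid CS (Fm.biim (Fm.atom p) (Fm.conj (Fm.atom p) (Fm.atom p))) ∧
      ¬ NValid CS (Fm.biim (Fm.jbox i (TmE.var x) (Fm.atom p))
        (Fm.jbox i (TmE.var x) (Fm.conj (Fm.atom p) (Fm.atom p))))) :=
  have h := ⟨nValid_biim_conj_self CS _, not_nValid_biim_jbox_var_atom_conj CS i x p⟩
  ⟨⟨_, _, _, _, h⟩, h⟩

/-- the epistemic regularity rule (JRE) is not validity preserving
in JTO_CS over interpreted-neighborhood systems. -/
theorem jre_not_validity_preserving (Ag Const Var Atom : Type)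
    [Fintype Ag] [Nonempty Ag] [Countable Const] [Countable Var] [Countable Atom]
    (CS : ConstSpec Ag Const Var Atom) (i : Ag) (x : Var) (p : Atom) :
    (∃ (φ ψ : Fm Ag Const Var Atom) (t : TmE Const Var) (j : Ag),
      NValid CS (Fm.biim φ ψ) ∧
      ¬ NValid CS (Fm.biim (Fm.jbox j t φ) (Fm.jbox j t ψ))) ∧
    (NValid CS (Fm.biim (Fm.atom p) (Fm.conj (Fm.atom p) (Fm.atom p))) ∧
      ¬ NValid CS (Fm.biim (Fm.jbox i (TmE.var x) (Fm.atom p))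
        (Fm.jbox i (TmE.var x) (Fm.conj (Fm.atom p) (Fm.atom p))))) :=
  jre_not_validity_preserving_general Ag Const Var Atom CS i x p

end JTO
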